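/- Let l ≥ 1 be an integer and let m₀, m₂, m₃ be real numbers with m₀, m₂, m₃ ≥ 1. Then for every integer i with 2 ≤ i ≤ 3l, the coefficient of x^i in the polynomial (m₃x³ + m₂x² + m₀)^l is at least 1. -/

import Mathlib

open Polynomial

namespace Polynomial

variable {R : Type*} [Semiring R] [PartialOrder R] [IsOrderedRing R] {p q : R[X]}

theorem coeff_mul_nonneg (hp : ∀ i, 0 ≤ p.coeff i) (hq : ∀ i, 0 ≤ q.coeff i) (n : ℕ) :
    0 ≤ (p * q).coeff n := by
  rw [coeff_mul]
  exact Finset.sum_nonneg fun x _ => mul_nonneg (hp x.1) (hq x.2)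

theorem coeff_pow_nonneg (hp : ∀ i, 0 ≤ p.coeff i) (n k : ℕ) : 0 ≤ (p ^ n).coeff k := by
  induction n generalizing k with
  | zero => rw [pow_zero, coeff_one]; split_ifs <;> simp
  | succ n ih => rw [pow_succ]; exact coeff_mul_nonneg ih hp k

theorem coeff_mul_coeff_le_coeff_mul (hp : ∀ i, 0 ≤ p.coeff i) (hq : ∀ i, 0 ≤ q.coeff i)
    (i j : ℕ) : p.coeff i * q.coeff j ≤ (p * q).coeff (i + j) := by
  rw [coeff_mul]
  exact Finset.single_le_sum (f := fun x : ℕ × ℕ => p.coeff x.1 * q.coeff x.2)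
    (fun x _ => mul_nonneg (hp x.1) (hq x.2)) (a := (i, j))
    (Finset.HasAntidiagonal.mem_antidiagonal.mpr rfl)

theorem one_le_coeff_mul_add (hp : ∀ i, 0 ≤ p.coeff i) (hq : ∀ i, 0 ≤ q.coeff i) {i j : ℕ}
    (hi : 1 ≤ p.coeff i) (hj : 1 ≤ q.coeff j) : 1 ≤ (p * q).coeff (i + j) :=
  (one_le_mul_of_one_le_of_one_le hi hj).trans (coeff_mul_coeff_le_coeff_mul hp hq i j)

/-- Every `i ∈ {0} ∪ [2, 3(n+1)]` is `j + k` with `j ∈ {0} ∪ [2, 3n]` and `k ∈ {0, 2, 3}`. -/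
theorem one_le_coeff_pow_of_one_le_coeff_zero_two_three (hp : ∀ i, 0 ≤ p.coeff i)
    (h₀ : 1 ≤ p.coeff 0) (h₂ : 1 ≤ p.coeff 2) (h₃ : 1 ≤ p.coeff 3) :
    ∀ n i, (i = 0 ∨ 2 ≤ i ∧ i ≤ 3 * n) → 1 ≤ (p ^ n).coeff i
  | 0, i, hi => by
    obtain rfl : i = 0 := by omega
    simp
  | n + 1, i, hi => by
    obtain ⟨j, k, rfl, hj, hk⟩ :
        ∃ j k, i = j + k ∧ (j = 0 ∨ 2 ≤ j ∧ j ≤ 3 * n) ∧ 1 ≤ p.coeff k := by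
      rcases hi with rfl | ⟨h2i, hi⟩
      · exact ⟨0, 0, rfl, .inl rfl, h₀⟩
      by_cases hin : i ≤ 3 * n
      · exact ⟨i, 0, rfl, .inr ⟨h2i, hin⟩, h₀⟩
      obtain hi' | rfl : i ≤ 3 * n + 2 ∨ i = 3 * n + 3 := by omega
      · exact ⟨i - 2, 2, by omega, by omega, h₂⟩
      · exact ⟨3 * n, 3, rfl, by omega, h₃⟩
    rw [pow_succ]
    exact one_le_coeff_mul_add (coeff_pow_nonneg hp n) hp
      (one_le_coeff_pow_of_one_le_coeff_zero_two_three hp h₀ h₂ h₃ n j hj) hk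

end Polynomial

theorem coeff_of_positive_part_ge_one_general
    (l : ℕ)
    (m₀ m₂ m₃ : ℝ) (hm₀ : 1 ≤ m₀) (hm₂ : 1 ≤ m₂) (hm₃ : 1 ≤ m₃) :
    ∀ i : ℕ, 2 ≤ i → i ≤ 3 * l →
      1 ≤ ((C m₃ * X ^ 3 + C m₂ * X ^ 2 + C m₀) ^ l).coeff i := by
  set P : ℝ[X] := C m₃ * X ^ 3 + C m₂ * X ^ 2 + C m₀
  have hcoeff (i : ℕ) : P.coeff i =
      (if i = 3 then m₃ else 0) + (if i = 2 then m₂ else 0) + (if i = 0 then m₀ else 0) := by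
    simp [P, coeff_X_pow, coeff_C]
  have hP : ∀ i, 0 ≤ P.coeff i := fun i => by
    rw [hcoeff]
    split_ifs <;> linarith
  intro i h2i hi
  exact one_le_coeff_pow_of_one_le_coeff_zero_two_three hP (by simp [hcoeff, hm₀])
    (by simp [hcoeff, hm₂]) (by simp [hcoeff, hm₃]) l i (.inr ⟨h2i, hi⟩)

theorem coeff_of_positive_part_ge_one
    (l : ℕ) (hl : 1 ≤ l)
    (m₀ m₂ m₃ : ℝ) (hm₀ : 1 ≤ m₀) (hm₂ : 1 ≤ m₂) (hm₃ : 1 ≤ m₃) :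
    ∀ i : ℕ, 2 ≤ i → i ≤ 3 * l →
      1 ≤ ((C m₃ * X ^ 3 + C m₂ * X ^ 2 + C m₀) ^ l).coeff i :=
  coeff_of_positive_part_ge_one_general l m₀ m₂ m₃ hm₀ hm₂ hm₃
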